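/- arXiv:math/0007183 — 4 statements merged into one kernel-verified Lean document; each statement's English description precedes it below -/
import Mathlib

section
/- Let H be a Hilbert space, Δ ∈ L(H) selfadjoint with 0 ≤ Δ ≤ I, and let T = [[I, -Δ],[0, I]] acting on H ⊕ H. Suppose there exists C > 0 such that T* [[I, -Δ],[-Δ, I]] T ≤ C² [[I, -Δ],[-Δ, I]]. Then I ≤ C²(I - Δ²). Consequently, if 1 is in the spectrum of Δ, no such C exists. -/
/-!
Conjugate the hypothesis by the column `J = [Δ; I]`. Since `T J = [0; I]`, the left side becomes
`J* T* M T J = [0; I]* M [0; I] = I`, while `J* M J = I - Δ²` for every `Δ`; hence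
`I ≤ C² (I - Δ²)`. In the C⋆-algebra `L(H)` this makes `I - Δ² = (I - Δ)(I + Δ)` invertible, and
since the two factors commute, `I - Δ` is invertible too.
-/

noncomputable section

/-- The 2×2 block operator `[[a, b], [c, d]]` acting on the Hilbert space direct
sum `H ⊕ H` (modelled as `WithLp 2 (H × H)`). -/
def blk {H : Type*} [NormedAddCommGroup H] [InnerProductSpace ℂ H] [CompleteSpace H]
    (a b c d : H →L[ℂ] H) : WithLp 2 (H × H) →L[ℂ] WithLp 2 (H × H) :=
  ((WithLp.prodContinuousLinearEquiv 2 ℂ H H).symm.toContinuousLinearMap).comp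
    ((((a.comp (ContinuousLinearMap.fst ℂ H H)) + (b.comp (ContinuousLinearMap.snd ℂ H H))).prod
      ((c.comp (ContinuousLinearMap.fst ℂ H H)) + (d.comp (ContinuousLinearMap.snd ℂ H H)))).comp
      (WithLp.prodContinuousLinearEquiv 2 ℂ H H).toContinuousLinearMap)

open ContinuousLinearMap
open scoped InnerProduct

section Column

variable {𝕜 F E E₁ E₂ : Type*} [RCLike 𝕜]
  [NormedAddCommGroup F] [InnerProductSpace 𝕜 F] [NormedAddCommGroup E] [InnerProductSpace 𝕜 E]
  [NormedAddCommGroup E₁] [InnerProductSpace 𝕜 E₁] [NormedAddCommGroup E₂] [InnerProductSpace 𝕜 E₂]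

/-- The column operator `[a; b] : F → E₁ ⊕ E₂`. -/
def col (a : F →L[𝕜] E₁) (b : F →L[𝕜] E₂) : F →L[𝕜] WithLp 2 (E₁ × E₂) :=
  (WithLp.prodContinuousLinearEquiv 2 𝕜 E₁ E₂).symm.toContinuousLinearMap ∘L a.prod b

@[simp]
lemma col_apply (a : F →L[𝕜] E₁) (b : F →L[𝕜] E₂) (x : F) :
    col a b x = WithLp.toLp 2 (a x, b x) := rfl

lemma adjoint_col_comp_col [CompleteSpace F] [CompleteSpace E₁] [CompleteSpace E₂]
    (a c : F →L[𝕜] E₁) (b d : F →L[𝕜] E₂) :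
    (col a b)† ∘L col c d = a† ∘L c + b† ∘L d := by
  ext1 x
  refine ext_inner_right 𝕜 fun y => ?_
  simp [adjoint_inner_left, inner_add_left, WithLp.prod_inner_apply]

lemma adjoint_conj_le_adjoint_conj [CompleteSpace F] [CompleteSpace E] {A B : E →L[𝕜] E}
    (h : A ≤ B) (S : F →L[𝕜] E) : S† ∘L A ∘L S ≤ S† ∘L B ∘L S := by
  rw [le_def] at h ⊢
  simpa [comp_sub, sub_comp] using h.adjoint_conj S

end Column

lemma blk_comp_col {F H : Type*} [NormedAddCommGroup F] [InnerProductSpace ℂ F]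
    [NormedAddCommGroup H] [InnerProductSpace ℂ H] [CompleteSpace H]
    (a b c d : H →L[ℂ] H) (e f : F →L[ℂ] H) :
    blk a b c d ∘L col e f = col (a ∘L e + b ∘L f) (c ∘L e + d ∘L f) := by
  ext1 x
  simp [blk]

lemma CStarAlgebra.isUnit_of_one_le_smul {A : Type*} [CStarAlgebra A] [PartialOrder A]
    [StarOrderedRing A] {a : A} {c : ℂ} (hc : c ≠ 0) (h : 1 ≤ c • a) : IsUnit a :=
  (isUnit_smul_iff (Units.mk0 c hc) a).mp (isUnit_of_le 1 h)

lemma one_notMem_spectrum_of_isUnit_one_sub_mul_self {R A : Type*} [CommRing R] [Ring A]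
    [Algebra R A] {a : A} (h : IsUnit (1 - a * a)) : (1 : R) ∉ spectrum R a := by
  have hfactor : 1 - a * a = (1 - a) * (1 + a) := by noncomm_ring
  have hcomm : Commute (1 - a) (1 + a) :=
    (Commute.one_right _).add_right ((Commute.one_left a).sub_left (Commute.refl a))
  rw [spectrum.mem_iff, map_one, not_not]
  exact (hcomm.isUnit_mul_iff.mp (hfactor ▸ h)).1

theorem block_inequality_consequence_general {H : Type*} [NormedAddCommGroup H]
    [InnerProductSpace ℂ H] [CompleteSpace H] (Δ : H →L[ℂ] H)
    (C : ℝ) (hC : 0 < C)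
    (hineq : (ContinuousLinearMap.adjoint (blk 1 (-Δ) 0 1)) ∘L (blk 1 (-Δ) (-Δ) 1) ∘L
        (blk 1 (-Δ) 0 1) ≤ ((C : ℂ) ^ 2) • blk 1 (-Δ) (-Δ) 1) :
    (1 : H →L[ℂ] H) ≤ ((C : ℂ) ^ 2) • (1 - Δ * Δ) ∧ (1 : ℝ) ∉ spectrum ℝ Δ := by
  set T := blk 1 (-Δ) 0 1
  set M := blk 1 (-Δ) (-Δ) 1
  set J := col Δ (1 : H →L[ℂ] H)
  set ι₂ := col (0 : H →L[ℂ] H) (1 : H →L[ℂ] H)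
  have hTJ : T ∘L J = ι₂ := by
    simp only [T, J, ι₂, blk_comp_col, ← mul_def]
    congr 1 <;> noncomm_ring
  have hJMJ : J† ∘L M ∘L J = 1 - Δ * Δ := by
    simp only [M, J, blk_comp_col, adjoint_col_comp_col, adjoint_one, ← mul_def]
    noncomm_ring
  have hιMι : ι₂† ∘L M ∘L ι₂ = 1 := by
    simp only [M, ι₂, blk_comp_col, adjoint_col_comp_col, adjoint_one, map_zero, ← mul_def]
    noncomm_ring
  have hle : (1 : H →L[ℂ] H) ≤ ((C : ℂ) ^ 2) • (1 - Δ * Δ) :=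
    calc (1 : H →L[ℂ] H) = ι₂† ∘L M ∘L ι₂ := hιMι.symm
      _ = J† ∘L (T† ∘L M ∘L T) ∘L J := by simp only [← hTJ, adjoint_comp, comp_assoc]
      _ ≤ J† ∘L (((C : ℂ) ^ 2) • M) ∘L J := adjoint_conj_le_adjoint_conj hineq J
      _ = ((C : ℂ) ^ 2) • (1 - Δ * Δ) := by rw [smul_comp, comp_smul, hJMJ]
  have hC2 : (C : ℂ) ^ 2 ≠ 0 := pow_ne_zero 2 (Complex.ofReal_ne_zero.mpr hC.ne')
  exact ⟨hle, one_notMem_spectrum_of_isUnit_one_sub_mul_self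
    (CStarAlgebra.isUnit_of_one_le_smul hC2 hle)⟩

/-- If `T = [[I, -Δ],[0, I]]` satisfies `T* M T ≤ C² M` for `M = [[I, -Δ],[-Δ, I]]`,
then `I ≤ C²(I - Δ²)`; consequently `1` cannot belong to the spectrum of `Δ`. -/
theorem block_inequality_consequence {H : Type*} [NormedAddCommGroup H]
    [InnerProductSpace ℂ H] [CompleteSpace H] (Δ : H →L[ℂ] H)
    (hsa : IsSelfAdjoint Δ) (h0 : 0 ≤ Δ) (h1 : Δ ≤ 1) (C : ℝ) (hC : 0 < C)
    (hineq : (ContinuousLinearMap.adjoint (blk 1 (-Δ) 0 1)) ∘L (blk 1 (-Δ) (-Δ) 1) ∘L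
        (blk 1 (-Δ) 0 1) ≤ ((C : ℂ) ^ 2) • blk 1 (-Δ) (-Δ) 1) :
    (1 : H →L[ℂ] H) ≤ ((C : ℂ) ^ 2) • (1 - Δ * Δ) ∧ (1 : ℝ) ∉ spectrum ℝ Δ :=
  block_inequality_consequence_general Δ C hC hineq

end
end

section
/- Let H₀ be an infinite-dimensional Hilbert space and A₀ a bounded selfadjoint operator on H₀ with 0 ≤ A₀ ≤ I, ker A₀ = 0, and 0 in the spectrum of A₀. On H = H₀ ⊕ H₀ with symmetry J = diag(I, -I), let A = diag(A₀, -A₀) and Π = [[I, -(I-A₀)^{1/2}],[(I-A₀)^{1/2}, -I]]. Then Π* J Π = A. -/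
/-!
Write `R = (I - A₀)^{1/2}`, which is selfadjoint. Block multiplication gives
`Π* J Π = diag(I - R², R² - I)`, and `R² = I - A₀` by the functional calculus, because
`A₀ ≤ I` puts the spectrum of `A₀` in `(-∞, 1]`, where `√(1 - t)² = 1 - t`.
-/

noncomputable section

section Blk

variable {H : Type*} [NormedAddCommGroup H] [InnerProductSpace ℂ H] [CompleteSpace H]

lemma blk_apply (a b c d : H →L[ℂ] H) (x : WithLp 2 (H × H)) :
    blk a b c d x = WithLp.toLp 2 (a x.fst + b x.snd, c x.fst + d x.snd) := rfl

lemma blk_comp (a b c d a' b' c' d' : H →L[ℂ] H) :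
    blk a b c d ∘L blk a' b' c' d' =
      blk (a ∘L a' + b ∘L c') (a ∘L b' + b ∘L d') (c ∘L a' + d ∘L c') (c ∘L b' + d ∘L d') := by
  ext x
  simp only [ContinuousLinearMap.comp_apply, blk_apply, add_apply,
    WithLp.toLp_fst, WithLp.toLp_snd, map_add]
  congr 1
  ext <;> exact add_add_add_comm ..

open ContinuousLinearMap in
lemma adjoint_blk (a b c d : H →L[ℂ] H) :
    adjoint (blk a b c d) = blk (adjoint a) (adjoint c) (adjoint b) (adjoint d) := by
  refine ((eq_adjoint_iff _ (blk a b c d)).mpr fun x y => ?_).symm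
  simp only [blk_apply, WithLp.prod_inner_apply, WithLp.ofLp_fst, WithLp.ofLp_snd,
    inner_add_left, inner_add_right, adjoint_inner_left]
  ring

open ContinuousLinearMap in
lemma adjoint_blk_comp_blk_one_neg_one_comp_blk {A R : H →L[ℂ] H} (hR : IsSelfAdjoint R)
    (hRR : R * R = 1 - A) :
    adjoint (blk 1 (-R) R (-1)) ∘L blk 1 0 0 (-1) ∘L blk 1 (-R) R (-1) = blk A 0 0 (-A) := by
  rw [adjoint_blk, blk_comp, blk_comp]
  simp only [← mul_def, ← star_eq_adjoint, star_one, star_neg, hR.star_eq, one_mul, mul_one,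
    zero_mul, add_zero, zero_add, neg_mul, mul_neg, neg_neg, neg_zero, hRR]
  congr 1 <;> abel

end Blk

lemma cfc_sqrt_one_sub_mul_self {A : Type*} [Ring A] [StarRing A] [PartialOrder A]
    [StarOrderedRing A] [TopologicalSpace A] [Algebra ℝ A]
    [ContinuousFunctionalCalculus ℝ A IsSelfAdjoint] [NonnegSpectrumClass ℝ A] {a : A}
    (ha : IsSelfAdjoint a) (ha1 : a ≤ 1) :
    cfc (fun t : ℝ => √(1 - t)) a * cfc (fun t : ℝ => √(1 - t)) a = 1 - a := by
  have hspec := (CFC.le_one_iff (R := ℝ) a ha).mp ha1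
  calc _ = cfc (fun t : ℝ => 1 - t) a := by
        rw [← cfc_mul ..]
        exact cfc_congr fun t ht => Real.mul_self_sqrt (sub_nonneg.mpr (hspec t ht))
    _ = 1 - a := by rw [cfc_sub .., cfc_const_one ℝ a, cfc_id' ℝ a]

theorem pi_star_J_pi_eq_A_general {H₀ : Type*} [NormedAddCommGroup H₀]
    [InnerProductSpace ℂ H₀] [CompleteSpace H₀] (A₀ : H₀ →L[ℂ] H₀)
    (hsa : IsSelfAdjoint A₀) (h1 : A₀ ≤ 1) :
    (ContinuousLinearMap.adjoint
        (blk 1 (-(cfc (fun t : ℝ => Real.sqrt (1 - t)) A₀))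
          (cfc (fun t : ℝ => Real.sqrt (1 - t)) A₀) (-1))) ∘L
      (blk 1 0 0 (-1)) ∘L
      (blk 1 (-(cfc (fun t : ℝ => Real.sqrt (1 - t)) A₀))
        (cfc (fun t : ℝ => Real.sqrt (1 - t)) A₀) (-1)) =
    blk A₀ 0 0 (-A₀) :=
  adjoint_blk_comp_blk_one_neg_one_comp_blk (cfc_predicate _ A₀)
    (cfc_sqrt_one_sub_mul_self hsa h1)

/-- With `A₀` selfadjoint, `0 ≤ A₀ ≤ I`, `ker A₀ = 0` and `0` in the spectrum of `A₀`,
and `R = (I - A₀)^{1/2}`, the block operator `Π = [[I, -R],[R, -I]]` on `H₀ ⊕ H₀`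
satisfies `Π* J Π = A`, where `J = diag(I, -I)` and `A = diag(A₀, -A₀)`. -/
theorem pi_star_J_pi_eq_A {H₀ : Type*} [NormedAddCommGroup H₀]
    [InnerProductSpace ℂ H₀] [CompleteSpace H₀] (A₀ : H₀ →L[ℂ] H₀)
    (hsa : IsSelfAdjoint A₀) (h0 : 0 ≤ A₀) (h1 : A₀ ≤ 1)
    (hker : ∀ x : H₀, A₀ x = 0 → x = 0) (hspec : (0 : ℝ) ∈ spectrum ℝ A₀) :
    (ContinuousLinearMap.adjoint
        (blk 1 (-(cfc (fun t : ℝ => Real.sqrt (1 - t)) A₀))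
          (cfc (fun t : ℝ => Real.sqrt (1 - t)) A₀) (-1))) ∘L
      (blk 1 0 0 (-1)) ∘L
      (blk 1 (-(cfc (fun t : ℝ => Real.sqrt (1 - t)) A₀))
        (cfc (fun t : ℝ => Real.sqrt (1 - t)) A₀) (-1)) =
    blk A₀ 0 0 (-A₀) :=
  pi_star_J_pi_eq_A_general A₀ hsa h1

end
end

section
/- Let S be a unital semigroup acting on a set X via φ, and let α : S × X → ℂ∗ satisfy α(ab,x)·conj(α(ab,y)) = α(a,φ(b,x))·conj(α(a,φ(b,y)))·α(b,x)·conj(α(b,y)) for all a,b ∈ S and x,y ∈ X. Then σ(a,b) := α(a,φ(b,x))⁻¹ α(b,x)⁻¹ α(ab,x) is independent of x ∈ X, satisfies |σ(a,b)| = 1, and satisfies the 2-cocycle identity σ(a,b)σ(ab,c) = σ(a,bc)σ(b,c) for all a,b,c ∈ S. -/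
open scoped ComplexConjugate

/-!
Write `σₓ(a,b) = α(a,φ(b,x))⁻¹ α(b,x)⁻¹ α(ab,x)`. Dividing the hypothesis by its right-hand side
turns it into `σₓ(a,b) · conj σ_y(a,b) = 1` for all `x, y`. Taking `x = y` shows `|σ_y(a,b)| = 1`,
so `conj σ_y(a,b)` is the inverse of `σ_y(a,b)`, and uniqueness of inverses gives `σₓ = σ_y`.
The cocycle identity then holds because `σ_{φ(c,x)}(a,b) σₓ(ab,c) = σₓ(a,bc) σₓ(b,c)` telescopes.
-/

section Twist

variable {S X : Type*} [Monoid S] (φ : S → X → X) (α : S → X → ℂ)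

noncomputable def twist (x : X) (a b : S) : ℂ := (α a (φ b x))⁻¹ * (α b x)⁻¹ * α (a * b) x

variable {φ α}

theorem twist_mul_conj_twist (hα : ∀ a x, α a x ≠ 0)
    (hrel : ∀ a b : S, ∀ x y : X,
      α (a * b) x * conj (α (a * b) y) =
        α a (φ b x) * conj (α a (φ b y)) * (α b x * conj (α b y)))
    (a b : S) (x y : X) :
    twist φ α x a b * conj (twist φ α y a b) = 1 := by
  have hαc : ∀ a x, conj (α a x) ≠ 0 := fun a x => (map_ne_zero _).mpr (hα a x)
  simp only [twist, map_mul, map_inv₀]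
  field_simp [hα a (φ b x), hα b x, hαc a (φ b y), hαc b y]
  linear_combination hrel a b x y

theorem norm_eq_one_of_mul_conj_eq_one {z : ℂ} (h : z * conj z = 1) : ‖z‖ = 1 := by
  rw [Complex.mul_conj'] at h
  have hsq : ‖z‖ ^ 2 = 1 := by exact_mod_cast h
  exact (pow_eq_one_iff_of_nonneg (norm_nonneg z) two_ne_zero).mp hsq

theorem twist_mul_twist (hφ : ∀ a b x, φ a (φ b x) = φ (a * b) x) (hα : ∀ a x, α a x ≠ 0)
    (a b c : S) (x : X) :
    twist φ α (φ c x) a b * twist φ α x (a * b) c =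
      twist φ α x a (b * c) * twist φ α x b c := by
  simp only [twist, hφ, mul_assoc]
  field_simp [hα (a * b) (φ c x), hα (b * c) x]

end Twist

theorem sigma_cocycle_general {S X : Type*} [Monoid S] (φ : S → X → X)
    (hφ : ∀ a b x, φ a (φ b x) = φ (a * b) x)
    (α : S → X → ℂ) (hα : ∀ a x, α a x ≠ 0)
    (hrel : ∀ a b : S, ∀ x y : X,
      α (a * b) x * conj (α (a * b) y) =
        α a (φ b x) * conj (α a (φ b y)) * (α b x * conj (α b y)))
    (x₀ : X) :
    let σ : S → S → ℂ := fun a b => (α a (φ b x₀))⁻¹ * (α b x₀)⁻¹ * α (a * b) x₀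
    (∀ a b : S, ∀ x : X,
        (α a (φ b x))⁻¹ * (α b x)⁻¹ * α (a * b) x = σ a b) ∧
    (∀ a b : S, ‖σ a b‖ = 1) ∧
    (∀ a b c : S, σ a b * σ (a * b) c = σ a (b * c) * σ b c) := by
  intro σ
  have hunit := twist_mul_conj_twist hα hrel
  have hindep : ∀ a b x, twist φ α x a b = twist φ α x₀ a b := fun a b x =>
    left_inv_eq_right_inv (hunit a b x x₀) (by rw [mul_comm]; exact hunit a b x₀ x₀)
  refine ⟨hindep, fun a b => norm_eq_one_of_mul_conj_eq_one (hunit a b x₀ x₀), fun a b c => ?_⟩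
  show twist φ α x₀ a b * _ = _
  rw [← hindep a b (φ c x₀)]
  exact twist_mul_twist hφ hα a b c x₀

/-- If `α : S × X → ℂ*` satisfies the multiplicative relation
`α(ab,x)·conj(α(ab,y)) = α(a,φ(b,x))·conj(α(a,φ(b,y)))·α(b,x)·conj(α(b,y))`,
then `σ(a,b) = α(a,φ(b,x))⁻¹ α(b,x)⁻¹ α(ab,x)` is independent of `x`,
unimodular, and satisfies the 2-cocycle identity. -/
theorem sigma_cocycle {S X : Type*} [Monoid S] (φ : S → X → X)
    (hφ : ∀ a b x, φ a (φ b x) = φ (a * b) x) (hφe : ∀ x, φ 1 x = x)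
    (α : S → X → ℂ) (hα : ∀ a x, α a x ≠ 0)
    (hrel : ∀ a b : S, ∀ x y : X,
      α (a * b) x * conj (α (a * b) y) =
        α a (φ b x) * conj (α a (φ b y)) * (α b x * conj (α b y)))
    (x₀ : X) :
    let σ : S → S → ℂ := fun a b => (α a (φ b x₀))⁻¹ * (α b x₀)⁻¹ * α (a * b) x₀
    (∀ a b : S, ∀ x : X,
        (α a (φ b x))⁻¹ * (α b x)⁻¹ * α (a * b) x = σ a b) ∧
    (∀ a b : S, ‖σ a b‖ = 1) ∧
    (∀ a b c : S, σ a b * σ (a * b) c = σ a (b * c) * σ b c) :=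
  sigma_cocycle_general φ hφ α hα hrel x₀
end

section
/- Let S be a group acting on a set X via φ with multiplier α satisfying the cocycle relation, and let K : X × X → L(H) be a hermitian kernel on a Kreĭn space H satisfying the invariance K(φ(a,x), φ(a,y)) = conj(α(a,x))·α(a,y)·K(x,y) for all a ∈ S, x,y ∈ X. Then for each a ∈ S, the linear map ψ_a on finitely supported H-valued functions, determined by ψ_a(ξ_x) = α(a,x)⁻¹ ξ_{φ(a,x)}, is isometric with respect to the (indefinite) inner product [f,g]_K = Σ_{x,y} [K(x,y) f(y), g(x)]_H. -/
open scoped ComplexConjugate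
open ContinuousLinearMap

noncomputable section

/-- The (indefinite) sesquilinear form `[f,g]_K = Σ_{x,y} ⟨K(x,y) f(y), g(x)⟩` induced by an
operator-valued kernel `K` on finitely supported `H`-valued functions. -/
def kerForm {X H : Type*} [NormedAddCommGroup H] [InnerProductSpace ℂ H]
    (K : X → X → H →L[ℂ] H) (f g : X →₀ H) : ℂ :=
  f.sum fun y fy => g.sum fun x gx => (inner ℂ (K x y fy) gx : ℂ)

/-- The map `ψ_a` determined on the elementary functions by `ψ_a(ξ_x) = α(a,x)⁻¹ ξ_{φ(a,x)}`. -/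
def psiMap {S X H : Type*} [NormedAddCommGroup H] [InnerProductSpace ℂ H]
    (φ : S → X → X) (α : S → X → ℂ) (a : S) (f : X →₀ H) : X →₀ H :=
  f.sum fun x ξ => Finsupp.single (φ a x) ((α a x)⁻¹ • ξ)

/-! `[·,·]_K` is biadditive, so it suffices to check isometry on pairs of elementary
functions `ξ_y, η_x`; there the invariance of `K` produces the factor `conj (α a x) * α a y`,
which exactly cancels the factors `(α a y)⁻¹` and `conj (α a x)⁻¹` put in by `ψ_a`. -/

section KerForm

variable {X H : Type*} [NormedAddCommGroup H] [InnerProductSpace ℂ H] (K : X → X → H →L[ℂ] H)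

lemma kerForm_add_left (f₁ f₂ g : X →₀ H) :
    kerForm K (f₁ + f₂) g = kerForm K f₁ g + kerForm K f₂ g := by
  unfold kerForm
  rw [Finsupp.sum_add_index' (fun _ => by simp) (fun _ _ _ => ?_)]
  simp [Finsupp.sum_add]

lemma kerForm_add_right (f g₁ g₂ : X →₀ H) :
    kerForm K f (g₁ + g₂) = kerForm K f g₁ + kerForm K f g₂ := by
  unfold kerForm
  rw [← Finsupp.sum_add]
  refine Finsupp.sum_congr fun _ _ => ?_
  rw [Finsupp.sum_add_index' (fun _ => by simp) (fun _ _ _ => inner_add_right _ _ _)]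

lemma kerForm_single_single (y x : X) (ξ η : H) :
    kerForm K (Finsupp.single y ξ) (Finsupp.single x η) = inner ℂ (K x y ξ) η := by
  simp [kerForm]

lemma kerForm_finsuppSum_left {ι M : Type*} [Zero M] (f : ι →₀ M) (F : ι → M → X →₀ H)
    (g : X →₀ H) : kerForm K (f.sum F) g = f.sum fun i m => kerForm K (F i m) g :=
  map_finsuppSum (AddMonoidHom.mk' (kerForm K · g) (kerForm_add_left K · · g)) f F

lemma kerForm_finsuppSum_right {ι M : Type*} [Zero M] (f : X →₀ H) (g : ι →₀ M)
    (G : ι → M → X →₀ H) : kerForm K f (g.sum G) = g.sum fun i m => kerForm K f (G i m) :=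
  map_finsuppSum (AddMonoidHom.mk' (kerForm K f ·) (kerForm_add_right K f)) g G

lemma kerForm_finsuppSum_finsuppSum {ι κ M N : Type*} [Zero M] [Zero N] (f : ι →₀ M)
    (F : ι → M → X →₀ H) (g : κ →₀ N) (G : κ → N → X →₀ H) :
    kerForm K (f.sum F) (g.sum G) = f.sum fun i m => g.sum fun j n => kerForm K (F i m) (G j n) := by
  rw [kerForm_finsuppSum_left]
  simp only [kerForm_finsuppSum_right]

end KerForm

lemma inner_conj_mul_smul_apply_inv_smul {E F : Type*} [NormedAddCommGroup E]
    [InnerProductSpace ℂ E] [NormedAddCommGroup F] [InnerProductSpace ℂ F]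
    {c d : ℂ} (hc : c ≠ 0) (hd : d ≠ 0) (T : E →L[ℂ] F) (ξ : E) (η : F) :
    inner ℂ (((conj d * c) • T) (c⁻¹ • ξ)) (d⁻¹ • η) = inner ℂ (T ξ) η := by
  simp only [smul_apply, map_smul, smul_smul, inner_smul_left, inner_smul_right, map_mul,
    map_inv₀, Complex.conj_conj]
  have hc' : conj c ≠ 0 := (map_ne_zero _).2 hc
  field_simp

theorem psi_isometric_general {S X H : Type*}
    [NormedAddCommGroup H] [InnerProductSpace ℂ H]
    (φ : S → X → X)
    (α : S → X → ℂ) (hα : ∀ a x, α a x ≠ 0)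
    (K : X → X → H →L[ℂ] H)
    (hinv : ∀ (a : S) (x y : X),
      K (φ a x) (φ a y) = (conj (α a x) * α a y) • K x y) :
    ∀ (a : S) (f g : X →₀ H),
      kerForm K (psiMap φ α a f) (psiMap φ α a g) = kerForm K f g := by
  intro a f g
  conv_rhs => rw [← f.sum_single, ← g.sum_single]
  rw [psiMap, psiMap, kerForm_finsuppSum_finsuppSum, kerForm_finsuppSum_finsuppSum]
  refine Finsupp.sum_congr fun y _ => Finsupp.sum_congr fun x _ => ?_
  rw [kerForm_single_single, kerForm_single_single, hinv,
    inner_conj_mul_smul_apply_inv_smul (hα a y) (hα a x)]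

/-- For a group `S` acting on `X` with multiplier `α`, and a `φ`-invariant hermitian kernel `K`
(satisfying `K(φ(a,x), φ(a,y)) = conj(α(a,x)) α(a,y) K(x,y)`), each map `ψ_a` is isometric
with respect to the inner product `[·,·]_K`. -/
theorem psi_isometric {S X H : Type*} [Group S]
    [NormedAddCommGroup H] [InnerProductSpace ℂ H] [CompleteSpace H]
    (φ : S → X → X) (hφ : ∀ a b x, φ a (φ b x) = φ (a * b) x) (hφe : ∀ x, φ 1 x = x)
    (α : S → X → ℂ) (hα : ∀ a x, α a x ≠ 0)
    (K : X → X → H →L[ℂ] H) (hherm : ∀ x y, K x y = adjoint (K y x))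
    (hinv : ∀ (a : S) (x y : X),
      K (φ a x) (φ a y) = (conj (α a x) * α a y) • K x y) :
    ∀ (a : S) (f g : X →₀ H),
      kerForm K (psiMap φ α a f) (psiMap φ α a g) = kerForm K f g :=
  psi_isometric_general φ α hα K hinv

end
end
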